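/- Let S and T be finite sets and let f : S ⇸ T and g : T ⇸ S be matchings (partial injections). Then there exists a matching M : S ⇸ T such that (1) the coimage of f is contained in the coimage of M, (2) the coimage of g is contained in the image of M, and (3) whenever M(s) = t, either f(s) = t or g(t) = s. -/

import Mathlib

/-!
Start from `f` and let `R ⊆ T` be the set of elements reachable from some `t ∈ dom g \ im f`
along alternating paths `t ↦ g t ↦ f (g t) ↦ ⋯`. Keep the `f`-edges outside `R` and use the
reversed `g`-edges `g t ↦ t` for `t ∈ R`. Every `t ∈ dom g` is then covered: either `t ∈ R`,
or `t = f s` with `s ≠ g t'` for all `t' ∈ R` (else `t ∈ R`), so `s` keeps its `f`-edge.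
The two kinds of edges never collide, because if `f s ∈ R` then, by injectivity of `f`,
`s` is itself `g t₀` for some `t₀ ∈ R`.
-/

/-- A matching (partial injection) from `S` to `T`, encoded as an `Option`-valued map:
no two elements of `S` are sent to the same element of `T`. -/
def IsMatching {S T : Type*} (f : S → Option T) : Prop :=
  ∀ s₁ s₂ t, f s₁ = some t → f s₂ = some t → s₁ = s₂

inductive AltReachable {S T : Type*} (f : S → Option T) (g : T → Option S) : T → Prop
  | start {t : T} : (g t).isSome → (∀ s, f s ≠ some t) → AltReachable f g t
  | step {t : T} {s : S} {t' : T} :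
      AltReachable f g t → g t = some s → f s = some t' → AltReachable f g t'

namespace AltReachable

variable {S T : Type*} {f : S → Option T} {g : T → Option S}

theorem exists_of_eq_some (hf : IsMatching f) {s : S} {t : T}
    (ht : AltReachable f g t) (hst : f s = some t) :
    ∃ t₀, AltReachable f g t₀ ∧ g t₀ = some s := by
  cases ht with
  | start _ hnot => exact absurd hst (hnot s)
  | step ht₀ hgt₀ hfs => exact ⟨_, ht₀, hf _ _ _ hfs hst ▸ hgt₀⟩

theorem exists_eq_some_of_not {t : T} (ht : (g t).isSome) (hnot : ¬AltReachable f g t) :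
    ∃ s, f s = some t := by
  by_contra! h
  exact hnot (start ht h)

end AltReachable

section AltMatching

open Classical in
noncomputable def altMatching {S T : Type*} (f : S → Option T) (g : T → Option S) :
    S → Option T := fun s =>
  if h : ∃ t, AltReachable f g t ∧ g t = some s then some h.choose else f s

variable {S T : Type*} {f : S → Option T} {g : T → Option S}

theorem altMatching_eq_some_cases {s : S} {t : T} (h : altMatching f g s = some t) :
    (AltReachable f g t ∧ g t = some s) ∨
      (f s = some t ∧ ¬∃ t', AltReachable f g t' ∧ g t' = some s) := by
  unfold altMatching at h
  split_ifs at h with hs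
  · exact .inl (Option.some_inj.mp h ▸ hs.choose_spec)
  · exact .inr ⟨h, hs⟩

theorem altMatching_of_altReachable (hg : IsMatching g) {s : S} {t : T}
    (ht : AltReachable f g t) (hgt : g t = some s) : altMatching f g s = some t := by
  have hs : ∃ t, AltReachable f g t ∧ g t = some s := ⟨t, ht, hgt⟩
  rw [altMatching, dif_pos hs, hg _ _ _ hs.choose_spec.2 hgt]

theorem altMatching_of_not_exists {s : S} (hs : ¬∃ t, AltReachable f g t ∧ g t = some s) :
    altMatching f g s = f s := by
  rw [altMatching, dif_neg hs]

theorem isMatching_altMatching (hf : IsMatching f) : IsMatching (altMatching f g) := by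
  intro s₁ s₂ t h₁ h₂
  rcases altMatching_eq_some_cases h₁ with ⟨ht, hg₁⟩ | ⟨hf₁, hn₁⟩ <;>
    rcases altMatching_eq_some_cases h₂ with ⟨ht', hg₂⟩ | ⟨hf₂, hn₂⟩
  · exact Option.some_inj.mp (hg₁.symm.trans hg₂)
  · exact absurd (ht.exists_of_eq_some hf hf₂) hn₂
  · exact absurd (ht'.exists_of_eq_some hf hf₁) hn₁
  · exact hf _ _ _ hf₁ hf₂

theorem isSome_altMatching {s : S} (hs : (f s).isSome) : (altMatching f g s).isSome := by
  unfold altMatching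
  split_ifs
  · rfl
  · exact hs

theorem exists_altMatching_eq_some (hg : IsMatching g) {t : T} (ht : (g t).isSome) :
    ∃ s, altMatching f g s = some t := by
  by_cases hreach : AltReachable f g t
  · obtain ⟨s, hgt⟩ := Option.isSome_iff_exists.mp ht
    exact ⟨s, altMatching_of_altReachable hg hreach hgt⟩
  · obtain ⟨s, hfs⟩ := AltReachable.exists_eq_some_of_not ht hreach
    refine ⟨s, (altMatching_of_not_exists ?_).trans hfs⟩
    rintro ⟨t', ht', hgt'⟩
    exact hreach (ht'.step hgt' hfs)

theorem altMatching_eq_some {s : S} {t : T} (h : altMatching f g s = some t) :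
    f s = some t ∨ g t = some s := by
  rcases altMatching_eq_some_cases h with ⟨_, hgt⟩ | ⟨hfs, _⟩
  · exact .inr hgt
  · exact .inl hfs

end AltMatching

theorem matching_lemma_general {S T : Type*}
    (f : S → Option T) (g : T → Option S)
    (hf : IsMatching f) (hg : IsMatching g) :
    ∃ M : S → Option T, IsMatching M ∧
      (∀ s, (f s).isSome → (M s).isSome) ∧
      (∀ t, (g t).isSome → ∃ s, M s = some t) ∧
      (∀ s t, M s = some t → f s = some t ∨ g t = some s) :=
  ⟨altMatching f g, isMatching_altMatching hf, fun _ => isSome_altMatching,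
    fun _ => exists_altMatching_eq_some hg, fun _ _ => altMatching_eq_some⟩

/-- The Matching Lemma: given finite sets `S`, `T` and matchings `f : S ⇸ T` and
`g : T ⇸ S`, there is a matching `M : S ⇸ T` whose coimage contains the coimage of `f`,
whose image contains the coimage of `g`, and such that `M(s) = t` implies `f(s) = t` or
`g(t) = s`. -/
theorem matching_lemma {S T : Type*} [Finite S] [Finite T]
    (f : S → Option T) (g : T → Option S)
    (hf : IsMatching f) (hg : IsMatching g) :
    ∃ M : S → Option T, IsMatching M ∧
      (∀ s, (f s).isSome → (M s).isSome) ∧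
      (∀ t, (g t).isSome → ∃ s, M s = some t) ∧
      (∀ s t, M s = some t → f s = some t ∨ g t = some s) :=
  matching_lemma_general f g hf hg
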